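/- Let u ⊆ {1,…,s} be nonempty and k ∈ {0,1,…,m−1}^{|u|}. Then Γ_{u,k} = Σ_{v⊆u} (−1)^{|v|} · #{ i ∈ {0,…,2^m−1} : C_{u,k}·i⃗ = 0 and ∇C_{u,k}·i⃗ = v⃗[u] }, where the sum is over all subsets v of u. -/

import Mathlib

open Finset

noncomputable section

/-- The bit vector `i⃗ ∈ F₂^m` of the integer `i = Σ_{ℓ=1}^m i_ℓ 2^{ℓ-1}`. -/
def bvec (m : ℕ) (i : ℕ) : Fin m → ZMod 2 :=
  fun ℓ => if Nat.testBit i ℓ.1 then 1 else 0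

/-- The `(r+1)`-st row (i.e. `r` with 0-indexing) of an `m × m` matrix over `F₂`,
as a vector in `F₂^m`; junk value `0` if `r ≥ m` (never used under the hypotheses below). -/
def rowAt (m : ℕ) (A : Matrix (Fin m) (Fin m) (ZMod 2)) (r : ℕ) : Fin m → ZMod 2 :=
  fun ℓ => if h : r < m then A ⟨r, h⟩ ℓ else 0

/-- The stacked matrix `C_{u,k}`: for each `j ∈ u`, the first `k j` rows of `C j`. -/
def stack {m s : ℕ} (C : Fin s → Matrix (Fin m) (Fin m) (ZMod 2))
    (u : Finset (Fin s)) (k : Fin s → ℕ) :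
    Matrix ((j : {x // x ∈ u}) × Fin (k j.1)) (Fin m) (ZMod 2) :=
  fun p => rowAt m (C p.1.1) p.2.1

/-- `∇C_{u,k}`: the matrix whose rows are the `(k j + 1)`-st rows (1-indexed) of `C j`, `j ∈ u`. -/
def grad {m s : ℕ} (C : Fin s → Matrix (Fin m) (Fin m) (ZMod 2))
    (u : Finset (Fin s)) (k : Fin s → ℕ) :
    Matrix {x // x ∈ u} (Fin m) (ZMod 2) :=
  fun j => rowAt m (C j.1) (k j.1)

/-- The coordinate `x_{ij} ∈ [0,1)` of the digital net generated by `C₁,…,C_s`: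
`x_{ij} = Σ_{ℓ=1}^m y_ℓ 2^{-ℓ}` where `y = C_j · i⃗` over `F₂`. -/
def pt {m s : ℕ} (C : Fin s → Matrix (Fin m) (Fin m) (ZMod 2)) (i : ℕ) (j : Fin s) : ℝ :=
  ∑ ℓ : Fin m, (((C j).mulVec (bvec m i) ℓ).val : ℝ) / 2 ^ (ℓ.1 + 1)

/-- The factor `N`: with `M(x,x') = max{k ∈ ℕ₀ : ⌊2^k x⌋ = ⌊2^k x'⌋}` (the number of matching
leading binary digits), `Nf x x' c` equals `1` if `M(x,x') > c` (equivalently the first `c+1`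
binary digits match), `-1` if `M(x,x') = c` (the first `c` digits match but not `c+1`), and
`0` if `M(x,x') < c`. -/
def Nf (x x' : ℝ) (c : ℕ) : ℤ :=
  if ⌊(2:ℝ) ^ (c + 1) * x⌋ = ⌊(2:ℝ) ^ (c + 1) * x'⌋ then 1
  else if ⌊(2:ℝ) ^ c * x⌋ = ⌊(2:ℝ) ^ c * x'⌋ then -1
  else 0

/-- The gain coefficient `Γ_{u,k} = 2^{-m} Σ_{i=0}^{2^m-1} Σ_{i'=0}^{2^m-1} ∏_{j∈u} N_{i,i',j}`. -/
def Gam {m s : ℕ} (C : Fin s → Matrix (Fin m) (Fin m) (ZMod 2))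
    (u : Finset (Fin s)) (k : Fin s → ℕ) : ℚ :=
  (2 ^ m : ℚ)⁻¹ * ∑ i ∈ Finset.range (2 ^ m), ∑ i' ∈ Finset.range (2 ^ m),
      ∏ j ∈ u, (Nf (pt C i j) (pt C i' j) (k j) : ℚ)

/-!
The factor `N_{i,i',j}` only sees the vector `C_j (i⃗ + i⃗')`: the first `c` binary digits of
`x_{ij}` and `x_{i'j}` agree iff the first `c` entries of `C_j (i⃗ + i⃗')` vanish, and
`i⃗ + i⃗'` is the bit vector of `i XOR i'`. So the double sum collapses to `2^m` times a single
sum over `d = i XOR i'`. For fixed `d`, the alternating sum over `v ⊆ u` has at most one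
nonzero term, `v` = the support of `∇C_{u,k} d⃗`, and its sign `(-1)^{|v|}` is the product of
the factors `N = -1` over `j ∈ v` and `N = 1` over `j ∈ u ∖ v`.
-/

open Matrix

def binaryPrefix (b : ℕ → ℕ) (n : ℕ) : ℕ :=
  ∑ ℓ ∈ range n, b ℓ * 2 ^ (n - 1 - ℓ)

lemma binaryPrefix_succ (b : ℕ → ℕ) (n : ℕ) :
    binaryPrefix b (n + 1) = 2 * binaryPrefix b n + b n := by
  rw [binaryPrefix, binaryPrefix, sum_range_succ, mul_sum, Nat.add_sub_cancel, Nat.sub_self,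
    pow_zero, mul_one]
  congr 1
  refine sum_congr rfl fun ℓ hℓ => ?_
  rw [show n - ℓ = n - 1 - ℓ + 1 by grind, pow_succ]
  ring

lemma binaryPrefix_eq_iff {b b' : ℕ → ℕ} (hb : ∀ ℓ, b ℓ ≤ 1) (hb' : ∀ ℓ, b' ℓ ≤ 1) (n : ℕ) :
    binaryPrefix b n = binaryPrefix b' n ↔ ∀ r < n, b r = b' r := by
  induction n with
  | zero => simp [binaryPrefix]
  | succ n ih =>
    rw [binaryPrefix_succ, binaryPrefix_succ, Nat.forall_lt_succ_right, ← ih]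
    have := hb n
    have := hb' n
    omega

lemma sum_Ico_div_two_pow_le {b : ℕ → ℕ} (hb : ∀ ℓ, b ℓ ≤ 1) {n N : ℕ} (h : n ≤ N) :
    ∑ ℓ ∈ Ico n N, (b ℓ : ℝ) / 2 ^ (ℓ + 1) ≤ 1 / 2 ^ n - 1 / 2 ^ N := by
  induction N, h using Nat.le_induction with
  | base => simp
  | succ N _ ih =>
    rw [sum_Ico_succ_top (by omega)]
    have hbN : (b N : ℝ) / 2 ^ (N + 1) ≤ 1 / 2 ^ (N + 1) := by
      gcongr
      exact_mod_cast hb N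
    have : (1 : ℝ) / 2 ^ N = 2 * (1 / 2 ^ (N + 1)) := by
      rw [pow_succ]
      field_simp
    linarith

lemma floor_two_pow_mul_sum_div_two_pow {b : ℕ → ℕ} (hb : ∀ ℓ, b ℓ ≤ 1) {n N : ℕ}
    (h : n ≤ N) :
    ⌊(2 : ℝ) ^ n * ∑ ℓ ∈ range N, (b ℓ : ℝ) / 2 ^ (ℓ + 1)⌋ = binaryPrefix b n := by
  rw [← sum_range_add_sum_Ico _ h, mul_add]
  have head : (2 : ℝ) ^ n * ∑ ℓ ∈ range n, (b ℓ : ℝ) / 2 ^ (ℓ + 1) = binaryPrefix b n := by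
    rw [binaryPrefix, mul_sum]
    push_cast
    refine sum_congr rfl fun ℓ hℓ => ?_
    have hpow : (2 : ℝ) ^ n = 2 ^ (n - 1 - ℓ) * 2 ^ (ℓ + 1) := by
      rw [← pow_add]
      congr 1
      grind
    rw [hpow, mul_assoc, mul_div_cancel₀ _ (by positivity), mul_comm]
  have tail : (2 : ℝ) ^ n * ∑ ℓ ∈ Ico n N, (b ℓ : ℝ) / 2 ^ (ℓ + 1) < 1 := by
    have : (0 : ℝ) < 2 ^ n / 2 ^ N := by positivity
    calc (2 : ℝ) ^ n * ∑ ℓ ∈ Ico n N, (b ℓ : ℝ) / 2 ^ (ℓ + 1)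
        ≤ 2 ^ n * (1 / 2 ^ n - 1 / 2 ^ N) := by gcongr; exact sum_Ico_div_two_pow_le hb h
      _ = 1 - 2 ^ n / 2 ^ N := by field_simp
      _ < 1 := by linarith
  have tail_nonneg : 0 ≤ (2 : ℝ) ^ n * ∑ ℓ ∈ Ico n N, (b ℓ : ℝ) / 2 ^ (ℓ + 1) := by positivity
  rw [head, Int.floor_eq_iff]
  push_cast
  constructor <;> linarith

def zeroExtend {R : Type*} [Zero R] {m : ℕ} (y : Fin m → R) (r : ℕ) : R :=
  if h : r < m then y ⟨r, h⟩ else 0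

lemma zeroExtend_add {R : Type*} [AddZeroClass R] {m : ℕ} (y y' : Fin m → R) (r : ℕ) :
    zeroExtend (y + y') r = zeroExtend y r + zeroExtend y' r := by
  unfold zeroExtend
  split_ifs <;> simp

lemma rowAt_dotProduct {m : ℕ} (A : Matrix (Fin m) (Fin m) (ZMod 2)) (r : ℕ)
    (w : Fin m → ZMod 2) : rowAt m A r ⬝ᵥ w = zeroExtend (A *ᵥ w) r := by
  unfold rowAt zeroExtend
  split_ifs <;> simp [mulVec]

lemma sum_div_two_pow_eq_sum_range_zeroExtend {m N : ℕ} (y : Fin m → ZMod 2) (h : m ≤ N) :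
    ∑ ℓ : Fin m, ((y ℓ).val : ℝ) / 2 ^ (ℓ.1 + 1) =
      ∑ ℓ ∈ range N, ((zeroExtend y ℓ).val : ℝ) / 2 ^ (ℓ + 1) := by
  rw [← sum_subset (range_subset_range.mpr h), ← Fin.sum_univ_eq_sum_range]
  · simp [zeroExtend]
  · intro ℓ _ hℓ
    have : ¬ℓ < m := by simpa using hℓ
    simp [zeroExtend, this]

lemma floor_two_pow_mul_binary_eq_iff {m : ℕ} (y y' : Fin m → ZMod 2) (n : ℕ) :
    ⌊(2 : ℝ) ^ n * ∑ ℓ : Fin m, ((y ℓ).val : ℝ) / 2 ^ (ℓ.1 + 1)⌋ =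
        ⌊(2 : ℝ) ^ n * ∑ ℓ : Fin m, ((y' ℓ).val : ℝ) / 2 ^ (ℓ.1 + 1)⌋ ↔
      ∀ r < n, zeroExtend y r = zeroExtend y' r := by
  have bit : ∀ (z : Fin m → ZMod 2) ℓ, (zeroExtend z ℓ).val ≤ 1 :=
    fun z ℓ => Nat.lt_succ_iff.mp (ZMod.val_lt _)
  have hN : m ≤ max n m := le_max_right n m
  rw [sum_div_two_pow_eq_sum_range_zeroExtend y hN, sum_div_two_pow_eq_sum_range_zeroExtend y' hN,
    floor_two_pow_mul_sum_div_two_pow (bit y) (le_max_left n m),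
    floor_two_pow_mul_sum_div_two_pow (bit y') (le_max_left n m), Nat.cast_inj,
    binaryPrefix_eq_iff (bit y) (bit y')]
  simp only [(ZMod.val_injective 2).eq_iff]

lemma bvec_xor (m i i' : ℕ) : bvec m (i ^^^ i') = bvec m i + bvec m i' := by
  funext ℓ
  simp only [bvec, Pi.add_apply, Nat.testBit_xor]
  cases Nat.testBit i ℓ <;> cases Nat.testBit i' ℓ <;> decide

def signFactor (e : ℕ → ZMod 2) (c : ℕ) : ℚ :=
  if ∀ r < c, e r = 0 then (if e c = 0 then 1 else -1) else 0

lemma Nf_pt_eq_signFactor {m s : ℕ} (C : Fin s → Matrix (Fin m) (Fin m) (ZMod 2)) (j : Fin s)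
    (c i i' : ℕ) :
    (Nf (pt C i j) (pt C i' j) c : ℚ) =
      signFactor (fun r => rowAt m (C j) r ⬝ᵥ bvec m (i ^^^ i')) c := by
  have digit_eq_iff : ∀ r, zeroExtend (C j *ᵥ bvec m i) r = zeroExtend (C j *ᵥ bvec m i') r ↔
      rowAt m (C j) r ⬝ᵥ bvec m (i ^^^ i') = 0 := fun r => by
    rw [rowAt_dotProduct, bvec_xor, mulVec_add, zeroExtend_add, CharTwo.add_eq_zero]
  simp only [Nf, pt, floor_two_pow_mul_binary_eq_iff, digit_eq_iff, Nat.forall_lt_succ_right,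
    signFactor]
  split_ifs <;> simp_all

lemma sum_range_two_pow_xor {M : Type*} [AddCommMonoid M] (f : ℕ → M) {m i : ℕ}
    (hi : i < 2 ^ m) :
    ∑ i' ∈ range (2 ^ m), f (i ^^^ i') = ∑ d ∈ range (2 ^ m), f d := by
  refine sum_nbij' (i ^^^ ·) (i ^^^ ·) ?_ ?_ ?_ ?_ ?_ <;>
    simp_all [Nat.xor_lt_two_pow hi]

lemma sum_powerset_neg_one_pow_mul_indicator_eq_prod {ι : Type*} [DecidableEq ι]
    (u : Finset ι) (a : ι → ZMod 2) :
    ∑ v ∈ u.powerset, (-1 : ℚ) ^ v.card *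
        (if (fun j : {x // x ∈ u} => a j) = (fun j => if j.1 ∈ v then 1 else 0) then 1 else 0) =
      ∏ j ∈ u, (if a j = 0 then 1 else -1) := by
  set v₀ := u.filter (fun j => ¬a j = 0)
  have indicator_eq_iff : ∀ v ∈ u.powerset,
      (fun j : {x // x ∈ u} => a j) = (fun j => if j.1 ∈ v then 1 else 0) ↔ v = v₀ := by
    intro v hv
    constructor
    · intro h
      ext j
      rw [mem_filter]
      constructor
      · intro hj
        have hju := mem_powerset.mp hv hj
        have := congrFun h ⟨j, hju⟩
        simp only [hj, if_true] at this
        exact ⟨hju, by simp [this]⟩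
      · rintro ⟨hju, hne⟩
        by_contra hj
        have := congrFun h ⟨j, hju⟩
        simp only [hj, if_false] at this
        exact hne this
    · rintro rfl
      funext j
      have : ∀ x : ZMod 2, x = if ¬x = 0 then 1 else 0 := by decide
      simpa [v₀, j.2] using this (a j)
  calc _ = ∑ v ∈ u.powerset, if v = v₀ then (-1 : ℚ) ^ v.card else 0 :=
        sum_congr rfl fun v hv => by simp [indicator_eq_iff v hv]
    _ = (-1) ^ v₀.card := by simp [v₀]
    _ = _ := by rw [prod_ite, prod_const_one, prod_const, one_mul]

lemma stack_mulVec_eq_zero_iff {m s : ℕ} (C : Fin s → Matrix (Fin m) (Fin m) (ZMod 2))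
    (u : Finset (Fin s)) (k : Fin s → ℕ) (w : Fin m → ZMod 2) :
    stack C u k *ᵥ w = 0 ↔ ∀ j ∈ u, ∀ r < k j, rowAt m (C j) r ⬝ᵥ w = 0 := by
  refine ⟨fun h j hj r hr => congrFun h ⟨⟨j, hj⟩, ⟨r, hr⟩⟩, fun h => ?_⟩
  funext p
  exact h p.1.1 p.1.2 p.2.1 p.2.2

lemma sum_powerset_stack_grad_indicator {m s : ℕ} (C : Fin s → Matrix (Fin m) (Fin m) (ZMod 2))
    (u : Finset (Fin s)) (k : Fin s → ℕ) (w : Fin m → ZMod 2) :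
    ∑ v ∈ u.powerset, (-1 : ℚ) ^ v.card *
        (if stack C u k *ᵥ w = 0 ∧
            grad C u k *ᵥ w = (fun j : {x // x ∈ u} => if j.1 ∈ v then 1 else 0) then 1 else 0) =
      ∏ j ∈ u, signFactor (fun r => rowAt m (C j) r ⬝ᵥ w) (k j) := by
  simp only [signFactor]
  rw [prod_ite_zero]
  by_cases h : ∀ j ∈ u, ∀ r < k j, rowAt m (C j) r ⬝ᵥ w = 0
  · simp only [if_pos h, (stack_mulVec_eq_zero_iff C u k w).mpr h, true_and]
    exact sum_powerset_neg_one_pow_mul_indicator_eq_prod u (fun j => rowAt m (C j) (k j) ⬝ᵥ w)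
  · rw [if_neg h]
    refine sum_eq_zero fun v _ => ?_
    simp [stack_mulVec_eq_zero_iff, h]

theorem statement_general (m s : ℕ)
    (C : Fin s → Matrix (Fin m) (Fin m) (ZMod 2))
    (u : Finset (Fin s))
    (k : Fin s → ℕ) :
    Gam C u k =
      ∑ v ∈ u.powerset, (-1 : ℚ) ^ v.card *
        (((Finset.range (2 ^ m)).filter (fun i =>
            (stack C u k).mulVec (bvec m i) = 0 ∧
            (grad C u k).mulVec (bvec m i) =
              fun j : {x // x ∈ u} => if j.1 ∈ v then 1 else 0)).card : ℚ) := by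
  set F : ℕ → ℚ := fun d => ∏ j ∈ u, signFactor (fun r => rowAt m (C j) r ⬝ᵥ bvec m d) (k j)
  have inner_sum : ∀ i ∈ range (2 ^ m),
      ∑ i' ∈ range (2 ^ m), ∏ j ∈ u, (Nf (pt C i j) (pt C i' j) (k j) : ℚ) =
        ∑ d ∈ range (2 ^ m), F d := fun i hi => by
    simp only [Nf_pt_eq_signFactor]
    exact sum_range_two_pow_xor F (mem_range.mp hi)
  rw [Gam, sum_congr rfl inner_sum, sum_const, card_range, nsmul_eq_mul, ← mul_assoc]
  push_cast
  rw [inv_mul_cancel₀ (by positivity), one_mul]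
  simp only [natCast_card_filter, mul_sum]
  rw [sum_comm]
  exact sum_congr rfl fun d _ => (sum_powerset_stack_grad_indicator C u k (bvec m d)).symm

theorem statement (m s : ℕ) (hm : 1 ≤ m) (hs : 1 ≤ s)
    (C : Fin s → Matrix (Fin m) (Fin m) (ZMod 2))
    (u : Finset (Fin s)) (hu : u.Nonempty)
    (k : Fin s → ℕ) (hk : ∀ j ∈ u, k j ≤ m - 1) :
    Gam C u k =
      ∑ v ∈ u.powerset, (-1 : ℚ) ^ v.card *
        (((Finset.range (2 ^ m)).filter (fun i =>
            (stack C u k).mulVec (bvec m i) = 0 ∧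
            (grad C u k).mulVec (bvec m i) =
              fun j : {x // x ∈ u} => if j.1 ∈ v then 1 else 0)).card : ℚ) :=
  statement_general m s C u k

end
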